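/- arXiv:2311.05737 — 5 statements merged into one kernel-verified Lean document; each statement's English description precedes it below -/
import Mathlib

section
/- Suppose Y is a disconnected set of vectors with decomposition (Y₁, Y₂), and both Y₁ and Y₂ have the property that every triple of vectors is contained in a full subset all of whose subsets are clean. Then Y also has this property. -/
/-!
If `Y = Y₁ ⊔ Y₂` with both parts full, then a vector of `Y` in the plane of `x ∈ Y₁` and
`y ∈ Y₂` lies on the line of `x` or on the line of `y`; hence the union of a full subset of
`Y₁` and a full subset of `Y₂` is full in `Y`. A triple inside one part is handled by the
hypothesis on that part. For `α, β ∈ Y₁` and `γ ∈ Y₂` take a clean full `G ⊆ Y₁` through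
`α, β` and put `F = (G ∩ span {α, β}) ∪ (Y ∩ span {γ})`. A subset of `F` is the union of a
subset of `G`, which is clean, and a set of positive multiples of `γ`, which is clean because
a nonempty closed subset of it is everything. As `γ ∉ span {α, β}`, the two pieces span
independent subspaces, and cleanness is preserved by such unions: nonnegative combinations
split uniquely along the two subspaces.
-/

open Set

variable {V : Type*} [AddCommGroup V] [Module ℝ V]

/-- The set of nonnegative linear combinations of elements of `A`. -/
def posSpan (A : Set V) : Set V :=
  {v | ∃ (s : Finset V) (c : V → ℝ),
    (↑s : Set V) ⊆ A ∧ (∀ x ∈ s, 0 ≤ c x) ∧ v = ∑ x ∈ s, c x • x}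

/-- The nonnegative span of the pair `α, β`. -/
def cone2 (α β : V) : Set V := {v | ∃ a b : ℝ, 0 ≤ a ∧ 0 ≤ b ∧ v = a • α + b • β}

/-- `B` is closed in `X`. -/
def IsClosedIn (X B : Set V) : Prop :=
  B ⊆ X ∧ ∀ α ∈ B, ∀ β ∈ B, ∀ γ ∈ X, γ ∈ cone2 α β → γ ∈ B

/-- `B` is coclosed in `X`. -/
def IsCoclosedIn (X B : Set V) : Prop := B ⊆ X ∧ IsClosedIn X (X \ B)

/-- `B` is biclosed in `X`. -/
def IsBiclosedIn (X B : Set V) : Prop := IsClosedIn X B ∧ IsClosedIn X (X \ B)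

/-- `B` is convex in `X`. -/
def IsConvexIn (X B : Set V) : Prop := B ⊆ X ∧ posSpan B ∩ X = B

/-- `B` is biconvex in `X`. -/
def IsBiconvexIn (X B : Set V) : Prop := IsConvexIn X B ∧ IsConvexIn X (X \ B)

/-- `B` is weakly separable in `X`. -/
def WeaklySeparableIn (X B : Set V) : Prop :=
  B ⊆ X ∧ posSpan B ∩ posSpan (X \ B) = {0}

/-- `B` is separable in `X`. -/
def SeparableIn (X B : Set V) : Prop :=
  B ⊆ X ∧ ∃ θ : Module.Dual ℝ V, (∀ α ∈ B, θ α < 0) ∧ (∀ α ∈ X \ B, 0 < θ α)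

/-- `X` is clean: every biclosed subset is weakly separable. -/
def IsCleanIn (X : Set V) : Prop := ∀ B : Set V, IsBiclosedIn X B → WeaklySeparableIn X B

/-- The closure of `U` in `X`: the smallest closed subset of `X` containing `U`. -/
def closureIn (X U : Set V) : Set V := ⋂₀ {C | U ⊆ C ∧ IsClosedIn X C}

/-- The interior of `K` in `X`. -/
def interiorIn (X K : Set V) : Set V := X \ closureIn X (X \ K)

/-- `F` is a full subset of `X`. -/
def IsFullIn (X F : Set V) : Prop :=
  F ⊆ X ∧ ∀ α ∈ F, ∀ β ∈ F, X ∩ (Submodule.span ℝ {α, β} : Set V) ⊆ F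

/-- Every triple of vectors of `X` is contained in a full subset of `X`,
every subset of which is clean. -/
def TripleCleanProp {V : Type*} [AddCommGroup V] [Module ℝ V] (X : Set V) : Prop :=
  ∀ α ∈ X, ∀ β ∈ X, ∀ γ ∈ X,
    ∃ F : Set V, IsFullIn X F ∧ α ∈ F ∧ β ∈ F ∧ γ ∈ F ∧ ∀ Z ⊆ F, IsCleanIn Z

open Submodule

lemma zero_mem_posSpan (A : Set V) : (0 : V) ∈ posSpan A :=
  ⟨∅, fun _ => 0, by simp, by simp, by simp⟩

lemma posSpan_empty : posSpan (∅ : Set V) = {0} := by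
  refine Subset.antisymm ?_ (singleton_subset_iff.2 (zero_mem_posSpan _))
  rintro v ⟨s, c, hs, -, rfl⟩
  rw [Finset.coe_eq_empty.1 (subset_empty_iff.1 hs), Finset.sum_empty]
  rfl

lemma posSpan_mono {A B : Set V} (h : A ⊆ B) : posSpan A ⊆ posSpan B := by
  rintro v ⟨s, c, hs, hc, rfl⟩
  exact ⟨s, c, hs.trans h, hc, rfl⟩

lemma posSpan_subset_span (A : Set V) : posSpan A ⊆ span ℝ A := by
  rintro v ⟨s, c, hs, -, rfl⟩
  exact sum_mem fun x hx => smul_mem _ _ (Submodule.subset_span (hs hx))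

lemma exists_add_of_mem_posSpan_union {A B : Set V} {v : V} (hv : v ∈ posSpan (A ∪ B)) :
    ∃ a ∈ posSpan A, ∃ b ∈ posSpan B, v = a + b := by
  classical
  obtain ⟨s, c, hs, hc, rfl⟩ := hv
  refine ⟨∑ x ∈ s.filter (· ∈ A), c x • x,
    ⟨s.filter (· ∈ A), c, fun x hx => (Finset.mem_filter.1 hx).2,
      fun x hx => hc x (Finset.mem_filter.1 hx).1, rfl⟩,
    ∑ x ∈ s.filter (· ∉ A), c x • x,
    ⟨s.filter (· ∉ A), c, fun x hx => (hs (Finset.mem_filter.1 hx).1).resolve_left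
      (Finset.mem_filter.1 hx).2, fun x hx => hc x (Finset.mem_filter.1 hx).1, rfl⟩,
    (Finset.sum_filter_add_sum_filter_not s _ _).symm⟩

lemma exists_add_of_mem_posSpan_of_subset_union {S Z₁ Z₂ : Set V} (hS : S ⊆ Z₁ ∪ Z₂) {v : V}
    (hv : v ∈ posSpan S) : ∃ v₁ ∈ posSpan (S ∩ Z₁), ∃ v₂ ∈ posSpan (S ∩ Z₂), v = v₁ + v₂ := by
  rw [← inter_eq_left.2 hS, inter_union_distrib_left] at hv
  exact exists_add_of_mem_posSpan_union hv

lemma weaklySeparableIn_of_forall {X B : Set V} (hB : B ⊆ X)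
    (h : ∀ v ∈ posSpan B, v ∈ posSpan (X \ B) → v = 0) : WeaklySeparableIn X B :=
  ⟨hB, Subset.antisymm (fun v hv => h v hv.1 hv.2)
    (singleton_subset_iff.2 ⟨zero_mem_posSpan _, zero_mem_posSpan _⟩)⟩

lemma WeaklySeparableIn.eq_zero {X B : Set V} (h : WeaklySeparableIn X B) {v : V}
    (hB : v ∈ posSpan B) (hX : v ∈ posSpan (X \ B)) : v = 0 := by
  have hv : v ∈ posSpan B ∩ posSpan (X \ B) := ⟨hB, hX⟩
  rwa [h.2] at hv

lemma IsClosedIn.inter_of_subset {X X' B : Set V} (h : IsClosedIn X B) (hX : X' ⊆ X) :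
    IsClosedIn X' (B ∩ X') :=
  ⟨inter_subset_right, fun α hα β hβ γ hγ hcone =>
    ⟨h.2 α hα.1 β hβ.1 γ (hX hγ) hcone, hγ⟩⟩

lemma IsBiclosedIn.inter_of_subset {X X' B : Set V} (h : IsBiclosedIn X B) (hX : X' ⊆ X) :
    IsBiclosedIn X' (B ∩ X') := by
  refine ⟨h.1.inter_of_subset hX, ?_⟩
  have hdiff : X' \ (B ∩ X') = (X \ B) ∩ X' := by
    ext x
    have := @hX x
    simp only [mem_sdiff, mem_inter_iff]
    tauto
  rw [hdiff]
  exact h.2.inter_of_subset hX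

lemma isCleanIn_of_forall_pos_smul {Z : Set V} {γ : V}
    (hZ : ∀ x ∈ Z, ∃ p : ℝ, 0 < p ∧ x = p • γ) : IsCleanIn Z := by
  intro B hB
  refine weaklySeparableIn_of_forall hB.1.1 fun v hvB hvC => ?_
  rcases B.eq_empty_or_nonempty with rfl | ⟨b, hb⟩
  · simpa [posSpan_empty] using hvB
  have hZB : Z \ B = ∅ := by
    refine eq_empty_of_forall_notMem fun c hc => hc.2 ?_
    obtain ⟨p, hp, hpb⟩ := hZ b (hB.1.1 hb)
    obtain ⟨q, hq, hqc⟩ := hZ c hc.1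
    refine hB.1.2 b hb b hb c hc.1 ⟨q / p, 0, by positivity, le_rfl, ?_⟩
    rw [hqc, hpb, smul_smul, div_mul_cancel₀ q hp.ne', zero_smul, add_zero]
  simpa [hZB, posSpan_empty] using hvC

lemma IsCleanIn.union {Z₁ Z₂ : Set V} (h₁ : IsCleanIn Z₁) (h₂ : IsCleanIn Z₂)
    (hd : Disjoint (span ℝ Z₁) (span ℝ Z₂)) : IsCleanIn (Z₁ ∪ Z₂) := by
  intro B hB
  refine weaklySeparableIn_of_forall hB.1.1 fun v hvB hvC => ?_
  obtain ⟨b₁, hb₁, b₂, hb₂, rfl⟩ := exists_add_of_mem_posSpan_of_subset_union hB.1.1 hvB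
  obtain ⟨c₁, hc₁, c₂, hc₂, hbc⟩ := exists_add_of_mem_posSpan_of_subset_union sdiff_subset hvC
  have hdiff : ∀ Z : Set V, ((Z₁ ∪ Z₂) \ B) ∩ Z ⊆ Z \ (B ∩ Z) :=
    fun _ _ hx => ⟨hx.2, fun h => hx.1.2 h.1⟩
  have hsub₁ : b₁ - c₁ ∈ span ℝ Z₁ := sub_mem
    (span_mono inter_subset_right (posSpan_subset_span _ hb₁))
    (span_mono inter_subset_right (posSpan_subset_span _ hc₁))
  have hsub₂ : b₁ - c₁ ∈ span ℝ Z₂ := by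
    rw [show b₁ - c₁ = c₂ - b₂ by rw [sub_eq_sub_iff_add_eq_add, hbc, add_comm]]
    exact sub_mem (span_mono inter_subset_right (posSpan_subset_span _ hc₂))
      (span_mono inter_subset_right (posSpan_subset_span _ hb₂))
  have hbc₁ : b₁ = c₁ := sub_eq_zero.1 (disjoint_def.1 hd _ hsub₁ hsub₂)
  have hbc₂ : b₂ = c₂ := by rw [hbc₁] at hbc; exact add_left_cancel hbc
  subst hbc₁ hbc₂
  rw [(h₁ _ (hB.inter_of_subset subset_union_left)).eq_zero hb₁
      (posSpan_mono (hdiff Z₁) hc₁),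
    (h₂ _ (hB.inter_of_subset subset_union_right)).eq_zero hb₂
      (posSpan_mono (hdiff Z₂) hc₂), add_zero]

lemma isFullIn_self (Y : Set V) : IsFullIn Y Y :=
  ⟨subset_rfl, fun _ _ _ _ => inter_subset_left⟩

namespace IsFullIn

lemma trans {Y X F : Set V} (hX : IsFullIn Y X) (hF : IsFullIn X F) : IsFullIn Y F :=
  ⟨hF.1.trans hX.1, fun α hα β hβ _ hγ =>
    hF.2 α hα β hβ ⟨hX.2 α (hF.1 hα) β (hF.1 hβ) hγ, hγ.2⟩⟩

lemma inter_submodule {Y F : Set V} (hF : IsFullIn Y F) (W : Submodule ℝ V) :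
    IsFullIn Y (F ∩ W) :=
  ⟨inter_subset_left.trans hF.1, fun α hα β hβ _ hγ =>
    ⟨hF.2 α hα.1 β hβ.1 hγ, span_le.2 (insert_subset hα.2 (singleton_subset_iff.2 hβ.2)) hγ.2⟩⟩

lemma inter_span_singleton_subset {Y F : Set V} (hF : IsFullIn Y F) {γ : V} (hγ : γ ∈ F) :
    Y ∩ span ℝ {γ} ⊆ F := by
  simpa only [pair_eq_singleton] using hF.2 γ hγ γ hγ

end IsFullIn

lemma exists_pos_smul_of_mem_span_singleton (θ : Module.Dual ℝ V) {x γ : V}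
    (hx : 0 < θ x) (hγ : 0 < θ γ) (h : x ∈ span ℝ {γ}) : ∃ p : ℝ, 0 < p ∧ x = p • γ := by
  obtain ⟨p, rfl⟩ := mem_span_singleton.1 h
  rw [map_smul, smul_eq_mul] at hx
  exact ⟨p, pos_of_mul_pos_left hx hγ.le, rfl⟩

structure IsFullDecomposition (Y Y₁ Y₂ : Set V) : Prop where
  union_eq : Y = Y₁ ∪ Y₂
  disjoint : Disjoint Y₁ Y₂
  full_left : IsFullIn Y Y₁
  full_right : IsFullIn Y Y₂

namespace IsFullDecomposition

variable {Y Y₁ Y₂ : Set V}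

lemma symm (h : IsFullDecomposition Y Y₁ Y₂) : IsFullDecomposition Y Y₂ Y₁ :=
  ⟨h.union_eq.trans (union_comm _ _), h.disjoint.symm, h.full_right, h.full_left⟩

lemma mem_or_mem (h : IsFullDecomposition Y Y₁ Y₂) {x : V} (hx : x ∈ Y) : x ∈ Y₁ ∨ x ∈ Y₂ := by
  rwa [h.union_eq] at hx

lemma mem_span_singleton_of_mem_left (h : IsFullDecomposition Y Y₁ Y₂) {x y z : V}
    (hx : x ∈ Y₁) (hy : y ∈ Y₂) (hz : z ∈ Y₁) (hzs : z ∈ span ℝ {x, y}) :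
    z ∈ span ℝ {x} := by
  by_contra hzx
  rw [pair_comm] at hzs
  have hy₁ : y ∈ Y₁ :=
    h.full_left.2 z hz x hx ⟨h.full_right.1 hy, mem_span_insert_exchange hzs hzx⟩
  exact disjoint_left.1 h.disjoint hy₁ hy

lemma mem_span_singleton_or (h : IsFullDecomposition Y Y₁ Y₂) {x y z : V}
    (hx : x ∈ Y₁) (hy : y ∈ Y₂) (hz : z ∈ Y) (hzs : z ∈ span ℝ {x, y}) :
    z ∈ span ℝ {x} ∨ z ∈ span ℝ {y} := by
  rcases h.mem_or_mem hz with hz | hz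
  · exact Or.inl (h.mem_span_singleton_of_mem_left hx hy hz hzs)
  · rw [pair_comm] at hzs
    exact Or.inr (h.symm.mem_span_singleton_of_mem_left hy hx hz hzs)

lemma isFullIn_union (h : IsFullDecomposition Y Y₁ Y₂) {F₁ F₂ : Set V}
    (hF₁ : IsFullIn Y F₁) (hF₂ : IsFullIn Y F₂) (hF₁Y₁ : F₁ ⊆ Y₁) (hF₂Y₂ : F₂ ⊆ Y₂) :
    IsFullIn Y (F₁ ∪ F₂) := by
  have hmixed : ∀ x ∈ F₁, ∀ y ∈ F₂, Y ∩ span ℝ {x, y} ⊆ F₁ ∪ F₂ := by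
    rintro x hx y hy z ⟨hzY, hzs⟩
    rcases h.mem_span_singleton_or (hF₁Y₁ hx) (hF₂Y₂ hy) hzY hzs with hz | hz
    exacts [Or.inl (hF₁.inter_span_singleton_subset hx ⟨hzY, hz⟩),
      Or.inr (hF₂.inter_span_singleton_subset hy ⟨hzY, hz⟩)]
  refine ⟨union_subset hF₁.1 hF₂.1, ?_⟩
  rintro x (hx | hx) y (hy | hy)
  · exact (hF₁.2 x hx y hy).trans subset_union_left
  · exact hmixed x hx y hy
  · rw [pair_comm]
    exact hmixed y hy x hx
  · exact (hF₂.2 x hx y hy).trans subset_union_right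

lemma exists_clean_full_of_mem_left_of_mem_right (h : IsFullDecomposition Y Y₁ Y₂)
    {θ : Module.Dual ℝ V} (hθ : ∀ x ∈ Y, 0 < θ x) (h₁ : TripleCleanProp Y₁)
    {α β γ : V} (hα : α ∈ Y₁) (hβ : β ∈ Y₁) (hγ : γ ∈ Y₂) :
    ∃ F : Set V, IsFullIn Y F ∧ α ∈ F ∧ β ∈ F ∧ γ ∈ F ∧ ∀ Z ⊆ F, IsCleanIn Z := by
  obtain ⟨G, hG, hαG, hβG, -, hGclean⟩ := h₁ α hα β hβ β hβ
  set W := span ℝ {α, β}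
  have hγW : γ ∉ W := fun hγW =>
    disjoint_left.1 h.disjoint (h.full_left.2 α hα β hβ ⟨h.full_right.1 hγ, hγW⟩) hγ
  have hray : ∀ x ∈ Y ∩ span ℝ {γ}, ∃ p : ℝ, 0 < p ∧ x = p • γ := fun x hx =>
    exists_pos_smul_of_mem_span_singleton θ (hθ x hx.1) (hθ γ (h.full_right.1 hγ)) hx.2
  refine ⟨(G ∩ W) ∪ (Y ∩ span ℝ {γ}),
    h.isFullIn_union ((h.full_left.trans hG).inter_submodule W)
      ((isFullIn_self Y).inter_submodule _) (fun x hx => hG.1 hx.1)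
      (h.full_right.inter_span_singleton_subset hγ),
    Or.inl ⟨hαG, subset_span (mem_insert _ _)⟩,
    Or.inl ⟨hβG, subset_span (mem_insert_of_mem _ rfl)⟩,
    Or.inr ⟨h.full_right.1 hγ, mem_span_singleton_self γ⟩, fun Z hZ => ?_⟩
  rw [← inter_eq_left.2 hZ, inter_union_distrib_left]
  exact (hGclean _ fun x hx => hx.2.1).union
    (isCleanIn_of_forall_pos_smul fun x hx => hray x hx.2)
    ((disjoint_span_singleton_of_notMem hγW).mono
      (span_le.2 fun x hx => hx.2.2) (span_le.2 fun x hx => hx.2.2))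

lemma exists_clean_full_of_mem_left (h : IsFullDecomposition Y Y₁ Y₂)
    {θ : Module.Dual ℝ V} (hθ : ∀ x ∈ Y, 0 < θ x) (h₁ : TripleCleanProp Y₁)
    {α β γ : V} (hα : α ∈ Y₁) (hβ : β ∈ Y₁) (hγ : γ ∈ Y) :
    ∃ F : Set V, IsFullIn Y F ∧ α ∈ F ∧ β ∈ F ∧ γ ∈ F ∧ ∀ Z ⊆ F, IsCleanIn Z := by
  rcases h.mem_or_mem hγ with hγ | hγ
  · obtain ⟨F, hF, hαF, hβF, hγF, hclean⟩ := h₁ α hα β hβ γ hγ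
    exact ⟨F, h.full_left.trans hF, hαF, hβF, hγF, hclean⟩
  · exact h.exists_clean_full_of_mem_left_of_mem_right hθ h₁ hα hβ hγ

end IsFullDecomposition

theorem tripleClean_of_disconnected_general
    {V : Type*} [AddCommGroup V] [Module ℝ V]
    (Y Y₁ Y₂ : Set V)
    (hhalf : ∃ θ : Module.Dual ℝ V, ∀ x ∈ Y, 0 < θ x)
    (hunion : Y = Y₁ ∪ Y₂) (hdisj : Disjoint Y₁ Y₂)
    (hfull₁ : IsFullIn Y Y₁) (hfull₂ : IsFullIn Y Y₂)
    (h₁ : TripleCleanProp Y₁) (h₂ : TripleCleanProp Y₂) :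
    TripleCleanProp Y := by
  obtain ⟨θ, hθ⟩ := hhalf
  have hY : IsFullDecomposition Y Y₁ Y₂ := ⟨hunion, hdisj, hfull₁, hfull₂⟩
  intro α hαY β hβY γ hγY
  rcases hY.mem_or_mem hαY with hα | hα <;> rcases hY.mem_or_mem hβY with hβ | hβ
  · exact hY.exists_clean_full_of_mem_left hθ h₁ hα hβ hγY
  · rcases hY.mem_or_mem hγY with hγ | hγ
    · obtain ⟨F, hF, hαF, hγF, hβF, hclean⟩ :=
        hY.exists_clean_full_of_mem_left hθ h₁ hα hγ hβY
      exact ⟨F, hF, hαF, hβF, hγF, hclean⟩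
    · obtain ⟨F, hF, hβF, hγF, hαF, hclean⟩ :=
        hY.symm.exists_clean_full_of_mem_left hθ h₂ hβ hγ hαY
      exact ⟨F, hF, hαF, hβF, hγF, hclean⟩
  · rcases hY.mem_or_mem hγY with hγ | hγ
    · obtain ⟨F, hF, hβF, hγF, hαF, hclean⟩ :=
        hY.exists_clean_full_of_mem_left hθ h₁ hβ hγ hαY
      exact ⟨F, hF, hαF, hβF, hγF, hclean⟩
    · obtain ⟨F, hF, hαF, hγF, hβF, hclean⟩ :=
        hY.symm.exists_clean_full_of_mem_left hθ h₂ hα hγ hβY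
      exact ⟨F, hF, hαF, hβF, hγF, hclean⟩
  · exact hY.symm.exists_clean_full_of_mem_left hθ h₂ hα hβ hγY

/-- If `Y` is disconnected with decomposition `(Y₁, Y₂)` and both parts
have the property that every triple lies in a full subset all of whose subsets are
clean, then `Y` has the same property. -/
theorem tripleClean_of_disconnected
    {V : Type*} [AddCommGroup V] [Module ℝ V]
    (Y Y₁ Y₂ : Set V)
    (hhalf : ∃ θ : Module.Dual ℝ V, ∀ x ∈ Y, 0 < θ x)
    (hunion : Y = Y₁ ∪ Y₂) (hdisj : Disjoint Y₁ Y₂)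
    (hne₁ : Y₁.Nonempty) (hne₂ : Y₂.Nonempty)
    (hfull₁ : IsFullIn Y Y₁) (hfull₂ : IsFullIn Y Y₂)
    (h₁ : TripleCleanProp Y₁) (h₂ : TripleCleanProp Y₂) :
    TripleCleanProp Y :=
  tripleClean_of_disconnected_general Y Y₁ Y₂ hhalf hunion hdisj hfull₁ hfull₂ h₁ h₂
end

section
/- Let X have a suitable ordering, let X_m be an initial segment, and let U be coclosed in X_m. Then the closure of U in X is biclosed in X. -/
open Set

variable {V : Type*} [AddCommGroup V] [Module ℝ V]

variable {V : Type*} [AddCommGroup V] [Module ℝ V]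

/-- `Y` is a linear subset of `X`: the intersection of `X` with a linear subspace. -/
def IsLinearSubsetOf (X Y : Set V) : Prop := ∃ L : Submodule ℝ V, Y = X ∩ (L : Set V)

/-- `α` is a fundamental vector of `Y`. -/
def IsFundIn (Y : Set V) (α : V) : Prop := α ∈ Y ∧ α ∉ posSpan (Y \ {α})

/-- The index domain of an enumeration of length `N` (with `N = ⊤` for countably
infinite sets). -/
def domN (N : ℕ∞) : Set ℕ := {j | (j : ℕ∞) < N}

/-- The whole set `X` enumerated by `g`. -/
def wholeSet (N : ℕ∞) (g : ℕ → V) : Set V := g '' domN N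

/-- The initial segment `Xᵢ = {γ₁, ..., γᵢ}` of the enumeration. -/
def seg (N : ℕ∞) (g : ℕ → V) (i : ℕ) : Set V := g '' (domN N ∩ {j | j < i})

/-- The enumeration `g` (of length `N`) is a suitable ordering of
`X = wholeSet N g`: `g` is injective, `X` lies in an open half-space, every
2-dimensional linear subset of `X` has fundamental vectors which are ordered before
all other vectors of that subset, and every triple of vectors of an initial segment
`Xᵢ` lies in a full subset `F` of `X` with `F ∩ Xᵢ` clean. -/
def SuitableEnum (N : ℕ∞) (g : ℕ → V) : Prop :=
  Set.InjOn g (domN N) ∧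
  (∃ θ : Module.Dual ℝ V, ∀ x ∈ wholeSet N g, 0 < θ x) ∧
  (∀ Y : Set V, IsLinearSubsetOf (wholeSet N g) Y →
      Module.finrank ℝ (Submodule.span ℝ Y) = 2 →
      (∃ α β : V, IsFundIn Y α ∧ IsFundIn Y β ∧ Y ⊆ cone2 α β) ∧
      (∀ α β : V, IsFundIn Y α → β ∈ Y → ¬ IsFundIn Y β →
        ∀ a ∈ domN N, ∀ b ∈ domN N, g a = α → g b = β → a < b)) ∧
  (∀ i : ℕ, ∀ α ∈ seg N g i, ∀ β ∈ seg N g i, ∀ γ ∈ seg N g i,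
      ∃ F : Set V, IsFullIn (wholeSet N g) F ∧ α ∈ F ∧ β ∈ F ∧ γ ∈ F ∧
        IsCleanIn (F ∩ seg N g i))


/-!
Write `Kᵢ` for the closure of `U ∩ Xᵢ` in `Xᵢ`. These sets increase with `i` and their union is
the closure of `U` in `X`, so it suffices that each `Kᵢ` is biclosed in `Xᵢ`, by induction on `i`.
When the next vector `γ` joins `Kᵢ`, biclosedness survives as long as `γ` is not generated by two
vectors outside `Kᵢ`: a vector `ζ ∈ Xᵢ` between `γ` and some `σ ∈ Kᵢ` is handled by a fundamental
vector `w` of the plane through `σ, γ`, which precedes `ζ`, so `w ∈ Xᵢ`; then `ζ` lies between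
`σ` and `w`, and `γ` between `ζ` and `w`. That `γ` is not generated from outside `Kᵢ` follows
from the coclosedness of `U` if `γ ∈ U`, and from the cleanness of a full subset through the
generators if `γ` is generated by `Kᵢ`. The case that `γ` does not join `Kᵢ` is the same argument
applied to the complement.
-/

lemma cone2_subset_posSpan {A : Set V} {α β : V} (hα : α ∈ A) (hβ : β ∈ A) :
    cone2 α β ⊆ posSpan A := by
  classical
  rintro v ⟨a, b, ha, hb, rfl⟩
  by_cases hαβ : α = β
  · subst hαβ
    refine ⟨{α}, fun _ => a + b, by simpa using hα, fun _ _ => add_nonneg ha hb, ?_⟩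
    simp [add_smul]
  · refine ⟨{α, β}, fun x => if x = α then a else b, ?_, ?_, ?_⟩
    · simp [Set.insert_subset_iff, hα, hβ]
    · intro x _
      dsimp only
      split_ifs
      exacts [ha, hb]
    · simp [Finset.sum_pair hαβ, Ne.symm hαβ]

lemma cone2_comm (α β : V) : cone2 α β = cone2 β α := by
  ext v
  constructor <;> rintro ⟨a, b, ha, hb, rfl⟩ <;> exact ⟨b, a, hb, ha, add_comm _ _⟩

section ClosedIn

variable {X Y B U U' : Set V}

lemma subset_closureIn (X U : Set V) : U ⊆ closureIn X U :=
  fun _ hx => Set.mem_sInter.2 fun _ hC => hC.1 hx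

lemma closureIn_subset (hUB : U ⊆ B) (hB : IsClosedIn X B) : closureIn X U ⊆ B :=
  Set.sInter_subset_of_mem ⟨hUB, hB⟩

lemma isClosedIn_self (X : Set V) : IsClosedIn X X :=
  ⟨subset_rfl, fun _ _ _ _ _ hγ _ => hγ⟩

lemma isClosedIn_closureIn (hUX : U ⊆ X) : IsClosedIn X (closureIn X U) := by
  refine ⟨closureIn_subset hUX (isClosedIn_self X), fun α hα β hβ γ hγ hcone => ?_⟩
  exact Set.mem_sInter.2 fun C hC =>
    hC.2.2 α (Set.mem_sInter.1 hα C hC) β (Set.mem_sInter.1 hβ C hC) γ hγ hcone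

lemma IsClosedIn.inter (hB : IsClosedIn X B) (hYX : Y ⊆ X) : IsClosedIn Y (B ∩ Y) :=
  ⟨Set.inter_subset_right, fun α hα β hβ γ hγ hcone =>
    ⟨hB.2 α hα.1 β hβ.1 γ (hYX hγ) hcone, hγ⟩⟩

lemma IsBiclosedIn.inter (hB : IsBiclosedIn X B) (hYX : Y ⊆ X) :
    IsBiclosedIn Y (B ∩ Y) := by
  refine ⟨hB.1.inter hYX, ?_⟩
  rw [show Y \ (B ∩ Y) = (X \ B) ∩ Y by ext; constructor <;> aesop]
  exact hB.2.inter hYX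

lemma IsBiclosedIn.diff (hB : IsBiclosedIn X B) : IsBiclosedIn X (X \ B) := by
  refine ⟨hB.2, ?_⟩
  rw [Set.sdiff_sdiff_cancel_left hB.1.1]
  exact hB.1

lemma closureIn_subset_closureIn (hYX : Y ⊆ X) (hUX : U ⊆ X) (hU' : U' ⊆ U ∩ Y) :
    closureIn Y U' ⊆ closureIn X U := by
  have hclosed : IsClosedIn Y (closureIn X U ∩ Y) := (isClosedIn_closureIn hUX).inter hYX
  have hsub : U' ⊆ closureIn X U ∩ Y := fun x hx =>
    ⟨subset_closureIn X U (hU' hx).1, (hU' hx).2⟩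
  exact (closureIn_subset hsub hclosed).trans Set.inter_subset_left

lemma isBiclosedIn_iUnion {X B : ℕ → Set V} (hX : Monotone X) (hB : Monotone B)
    (h : ∀ i, IsBiclosedIn (X i) (B i)) : IsBiclosedIn (⋃ i, X i) (⋃ i, B i) := by
  refine ⟨⟨Set.iUnion_mono fun i => (h i).1.1, ?_⟩, Set.sdiff_subset, ?_⟩
  · rintro α ⟨_, ⟨p, rfl⟩, hα⟩ β ⟨_, ⟨q, rfl⟩, hβ⟩ γ ⟨_, ⟨k, rfl⟩, hγ⟩ hcone
    let l := max (max p q) k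
    refine Set.mem_iUnion.2 ⟨l, (h l).1.2 α (hB (by omega) hα) β (hB (by omega) hβ) γ
      (hX (by omega) hγ) hcone⟩
  · rintro α ⟨⟨_, ⟨p, rfl⟩, hα⟩, hαB⟩ β ⟨⟨_, ⟨q, rfl⟩, hβ⟩, hβB⟩ γ hγX hcone
    refine ⟨hγX, fun ⟨_, ⟨k, rfl⟩, hγ⟩ => ?_⟩
    let l := max (max p q) k
    have hαl : α ∈ X l \ B l := ⟨hX (by omega) hα, fun h' => hαB (Set.mem_iUnion.2 ⟨l, h'⟩)⟩
    have hβl : β ∈ X l \ B l := ⟨hX (by omega) hβ, fun h' => hβB (Set.mem_iUnion.2 ⟨l, h'⟩)⟩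
    exact ((h l).2.2 α hαl β hβl γ ((h l).1.1 (hB (by omega) hγ)) hcone).2 (hB (by omega) hγ)

end ClosedIn

lemma mem_cone2_right_of_det_nonneg {φ ψ : V} {c₁ c₂ d₁ d₂ : ℝ} (hc₁ : 0 ≤ c₁)
    (hc₂ : 0 ≤ c₂) (hd₁ : 0 ≤ d₁) (hd₂ : 0 ≤ d₂) (hu : c₁ • φ + c₂ • ψ ≠ 0)
    (hD : 0 ≤ c₁ * d₂ - c₂ * d₁) :
    d₁ • φ + d₂ • ψ ∈ cone2 (c₁ • φ + c₂ • ψ) ψ := by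
  rcases hc₁.eq_or_lt with rfl | hc₁
  · have hc₂ : 0 < c₂ := hc₂.lt_of_ne fun h => hu (by simp [← h])
    obtain rfl : d₁ = 0 := by nlinarith
    exact ⟨0, d₂, le_rfl, hd₂, by module⟩
  · refine ⟨d₁ / c₁, (c₁ * d₂ - c₂ * d₁) / c₁, by positivity, div_nonneg hD hc₁.le, ?_⟩
    match_scalars <;> field_simp
    ring

lemma mem_cone2_left_of_det_nonpos {φ ψ : V} {c₁ c₂ d₁ d₂ : ℝ} (hc₁ : 0 ≤ c₁)
    (hc₂ : 0 ≤ c₂) (hd₁ : 0 ≤ d₁) (hd₂ : 0 ≤ d₂) (hu : c₁ • φ + c₂ • ψ ≠ 0)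
    (hD : c₁ * d₂ - c₂ * d₁ ≤ 0) :
    d₁ • φ + d₂ • ψ ∈ cone2 (c₁ • φ + c₂ • ψ) φ := by
  rw [add_comm (c₁ • φ)] at hu ⊢
  rw [add_comm (d₁ • φ)]
  exact mem_cone2_right_of_det_nonneg hc₂ hc₁ hd₂ hd₁ hu (by linarith)

/-- The sign of `s₁ t₂ - s₂ t₁` for `σ = s₁ φ + s₂ ψ`, `γ = t₁ φ + t₂ ψ` decides which boundary
ray of the cone lies on the far side of `γ` as seen from `σ`. -/
lemma exists_boundary_mem_cone2 {φ ψ σ γ : V} {a b : ℝ} (hσ : σ ∈ cone2 φ ψ)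
    (hγ : γ ∈ cone2 φ ψ) (ha : 0 ≤ a) (hb : 0 ≤ b) (hσ0 : σ ≠ 0)
    (hζ0 : a • σ + b • γ ≠ 0) :
    ∃ w ∈ ({φ, ψ} : Set V), a • σ + b • γ ∈ cone2 σ w ∧ γ ∈ cone2 (a • σ + b • γ) w := by
  obtain ⟨s₁, s₂, hs₁, hs₂, rfl⟩ := hσ
  obtain ⟨t₁, t₂, ht₁, ht₂, rfl⟩ := hγ
  have hζ : a • (s₁ • φ + s₂ • ψ) + b • (t₁ • φ + t₂ • ψ)
      = (a * s₁ + b * t₁) • φ + (a * s₂ + b * t₂) • ψ := by module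
  rw [hζ] at hζ0 ⊢
  rcases le_or_gt 0 (s₁ * t₂ - s₂ * t₁) with hD | hD
  · refine ⟨ψ, by simp, ?_, ?_⟩
    · exact mem_cone2_right_of_det_nonneg hs₁ hs₂ (by positivity) (by positivity) hσ0
        (by nlinarith)
    · exact mem_cone2_right_of_det_nonneg (by positivity) (by positivity) ht₁ ht₂ hζ0
        (by nlinarith)
  · refine ⟨φ, by simp, ?_, ?_⟩
    · exact mem_cone2_left_of_det_nonpos hs₁ hs₂ (by positivity) (by positivity) hσ0
        (by nlinarith)
    · exact mem_cone2_left_of_det_nonpos (by positivity) (by positivity) ht₁ ht₂ hζ0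
        (by nlinarith)

section Enumeration

variable {E : Type*} {N : ℕ∞} {g : ℕ → E} {i m : ℕ}

lemma mem_seg_iff {x : E} : x ∈ seg N g i ↔ ∃ j ∈ domN N, j < i ∧ g j = x := by
  simp only [seg, Set.mem_image, Set.mem_inter_iff, Set.mem_ofPred_eq, and_assoc]

lemma seg_zero : seg N g 0 = ∅ := by
  simp [seg]

lemma seg_mono : Monotone (seg N g) :=
  fun _ _ hij => Set.image_mono (Set.inter_subset_inter_right _ fun _ hx => lt_of_lt_of_le hx hij)

lemma seg_subset_wholeSet (i : ℕ) : seg N g i ⊆ wholeSet N g :=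
  Set.image_mono Set.inter_subset_left

lemma iUnion_seg : ⋃ i, seg N g i = wholeSet N g := by
  refine Set.Subset.antisymm (Set.iUnion_subset seg_subset_wholeSet) ?_
  rintro _ ⟨j, hj, rfl⟩
  exact Set.mem_iUnion.2 ⟨j + 1, mem_seg_iff.2 ⟨j, hj, j.lt_succ_self, rfl⟩⟩

lemma seg_succ_of_lt (hi : (i : ℕ∞) < N) : seg N g (i + 1) = insert (g i) (seg N g i) := by
  ext x
  simp only [mem_seg_iff, Set.mem_insert_iff, Nat.lt_succ_iff_lt_or_eq]
  constructor
  · rintro ⟨j, hj, hji | rfl, rfl⟩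
    exacts [Or.inr ⟨j, hj, hji, rfl⟩, Or.inl rfl]
  · rintro (rfl | ⟨j, hj, hji, rfl⟩)
    exacts [⟨i, hi, Or.inr rfl, rfl⟩, ⟨j, hj, Or.inl hji, rfl⟩]

lemma seg_succ_of_not_lt (hi : ¬ (i : ℕ∞) < N) : seg N g (i + 1) = seg N g i := by
  ext x
  simp only [mem_seg_iff, Nat.lt_succ_iff_lt_or_eq]
  constructor
  · rintro ⟨j, hj, hji | rfl, rfl⟩
    exacts [⟨j, hj, hji, rfl⟩, absurd hj hi]
  · rintro ⟨j, hj, hji, rfl⟩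
    exact ⟨j, hj, Or.inl hji, rfl⟩

lemma lt_of_apply_mem_seg (hinj : Set.InjOn g (domN N)) (hi : (i : ℕ∞) < N)
    (h : g i ∈ seg N g m) : i < m := by
  obtain ⟨j, hj, hjm, hgj⟩ := mem_seg_iff.1 h
  rwa [← hinj hj hi hgj]

lemma apply_notMem_seg (hinj : Set.InjOn g (domN N)) (hi : (i : ℕ∞) < N) :
    g i ∉ seg N g i :=
  fun h => (lt_of_apply_mem_seg hinj hi h).false

end Enumeration

namespace SuitableEnum

variable {N : ℕ∞} {g : ℕ → V} {i : ℕ}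

lemma ne_zero (hs : SuitableEnum N g) {x : V} (hx : x ∈ wholeSet N g) : x ≠ 0 := by
  obtain ⟨θ, hθ⟩ := hs.2.1
  rintro rfl
  simpa using hθ 0 hx

lemma exists_pos_smul_eq (hs : SuitableEnum N g) {x y : V} (hx : x ∈ wholeSet N g)
    (hy : y ∈ wholeSet N g) (hxy : ¬ LinearIndependent ℝ ![x, y]) :
    ∃ r : ℝ, 0 < r ∧ y = r • x := by
  obtain ⟨θ, hθ⟩ := hs.2.1
  rw [LinearIndependent.pair_iff' (hs.ne_zero hx)] at hxy
  push Not at hxy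
  obtain ⟨r, rfl⟩ := hxy
  have hθx := hθ x hx
  have hθy := hθ _ hy
  rw [map_smul, smul_eq_mul] at hθy
  exact ⟨r, pos_of_mul_pos_left hθy hθx.le, rfl⟩

/-- The fundamental vectors of the 2-dimensional linear subset through `σ` and `g i` precede
the non-fundamental vector `ζ`, hence lie in `Xᵢ` together with it. -/
lemma exists_mem_seg_mem_cone2 (hs : SuitableEnum N g) (hi : (i : ℕ∞) < N) {σ ζ : V}
    (hσ : σ ∈ seg N g i) (hζ : ζ ∈ seg N g i) {a b : ℝ} (ha : 0 ≤ a) (hb : 0 < b)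
    (hζeq : ζ = a • σ + b • g i) (hind : LinearIndependent ℝ ![σ, g i]) :
    ∃ φ ∈ seg N g i, ∃ ψ ∈ seg N g i, σ ∈ cone2 φ ψ ∧ g i ∈ cone2 φ ψ := by
  set Y := wholeSet N g ∩ (Submodule.span ℝ {σ, g i} : Set V)
  have hσY : σ ∈ Y := ⟨seg_subset_wholeSet i hσ, Submodule.subset_span (by simp)⟩
  have hγY : g i ∈ Y := ⟨⟨i, hi, rfl⟩, Submodule.subset_span (by simp)⟩
  have hζY : ζ ∈ Y := ⟨seg_subset_wholeSet i hζ, Submodule.mem_span_pair.2 ⟨a, b, hζeq.symm⟩⟩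
  have hrank : Module.finrank ℝ (Submodule.span ℝ Y) = 2 := by
    have hspan : Submodule.span ℝ Y = Submodule.span ℝ (Set.range ![σ, g i]) := by
      rw [Matrix.range_cons_cons_empty]
      exact le_antisymm (Submodule.span_le.2 Set.inter_subset_right)
        (Submodule.span_mono (Set.insert_subset_iff.2 ⟨hσY, by simpa using hγY⟩))
    rw [hspan, finrank_span_eq_card hind, Fintype.card_fin]
  obtain ⟨⟨φ, ψ, hφ, hψ, hYcone⟩, hfund_lt⟩ := hs.2.2.1 Y ⟨_, rfl⟩ hrank
  have hσζ : σ ≠ ζ := by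
    rintro rfl
    have h0 : (a - 1) • σ + b • g i = 0 :=
      calc (a - 1) • σ + b • g i = (a • σ + b • g i) - σ := by module
        _ = 0 := by rw [← hζeq, sub_self]
    exact hb.ne' (LinearIndependent.pair_iff.1 hind _ _ h0).2
  have hζ_not_fund : ¬ IsFundIn Y ζ := fun h => h.2 <|
    cone2_subset_posSpan (A := Y \ {ζ}) ⟨hσY, hσζ⟩
      ⟨hγY, fun h' => apply_notMem_seg hs.1 hi (h' ▸ hζ)⟩ ⟨a, b, ha, hb.le, hζeq⟩
  have hfund_mem : ∀ w, IsFundIn Y w → w ∈ seg N g i := by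
    intro w hw
    obtain ⟨j, hj, rfl⟩ := hw.1.1
    obtain ⟨k, hk, hki, rfl⟩ := mem_seg_iff.1 hζ
    exact mem_seg_iff.2 ⟨j, hj, (hfund_lt _ _ hw hζY hζ_not_fund j hj k hk rfl rfl).trans hki, rfl⟩
  exact ⟨φ, hfund_mem φ hφ, ψ, hfund_mem ψ hψ, hYcone hσY, hYcone hγY⟩

lemma exists_mem_seg_between (hs : SuitableEnum N g) (hi : (i : ℕ∞) < N) {σ ζ : V}
    (hσ : σ ∈ seg N g i) (hζ : ζ ∈ seg N g i) {a b : ℝ} (ha : 0 ≤ a) (hb : 0 < b)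
    (hζeq : ζ = a • σ + b • g i) :
    ∃ w ∈ seg N g i, ζ ∈ cone2 σ w ∧ g i ∈ cone2 ζ w := by
  have hX : seg N g i ⊆ wholeSet N g := seg_subset_wholeSet i
  by_cases hind : LinearIndependent ℝ ![σ, g i]
  · obtain ⟨φ, hφ, ψ, hψ, hσc, hγc⟩ := hs.exists_mem_seg_mem_cone2 hi hσ hζ ha hb hζeq hind
    obtain ⟨w, hw, hζw, hγw⟩ := exists_boundary_mem_cone2 hσc hγc ha hb.le
      (hs.ne_zero (hX hσ)) (hζeq ▸ hs.ne_zero (hX hζ))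
    rw [← hζeq] at hζw hγw
    rcases hw with rfl | rfl
    exacts [⟨w, hφ, hζw, hγw⟩, ⟨w, hψ, hζw, hγw⟩]
  · obtain ⟨r, hr, hγ⟩ := hs.exists_pos_smul_eq (hX hσ) ⟨i, hi, rfl⟩ hind
    refine ⟨σ, hσ, ⟨a + b * r, 0, by positivity, le_rfl, ?_⟩, ⟨0, r, le_rfl, hr.le, ?_⟩⟩
    · rw [hζeq, hγ]
      module
    · rw [hγ]
      module

/-- A clean full subset through `σ, τ, α` also contains `γ` and (if needed) `β`, and there `B`
is weakly separable. -/
lemma notMem_cone2_of_mem_cone2 (hs : SuitableEnum N g) {B : Set V}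
    (hB : IsBiclosedIn (seg N g i) B) {σ τ α β γ : V} (hσ : σ ∈ B) (hτ : τ ∈ B)
    (hα : α ∈ seg N g i \ B) (hβ : β ∈ seg N g i \ B) (hγ : γ ∈ wholeSet N g)
    (hγστ : γ ∈ cone2 σ τ) : γ ∉ cone2 α β := by
  rintro ⟨a, b, ha, hb, hγeq⟩
  obtain ⟨F, hF, hσF, hτF, hαF, hclean⟩ := hs.2.2.2 i σ (hB.1.1 hσ) τ (hB.1.1 hτ) α hα.1
  set Z := F ∩ seg N g i
  have hsep := (hclean _ (hB.inter (Set.inter_subset_right : Z ⊆ seg N g i))).2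
  have hγF : γ ∈ F := by
    obtain ⟨c, d, -, -, hγcd⟩ := hγστ
    exact hF.2 σ hσF τ hτF ⟨hγ, Submodule.mem_span_pair.2 ⟨c, d, hγcd.symm⟩⟩
  have hγB : γ ∈ posSpan (B ∩ Z) :=
    cone2_subset_posSpan (A := B ∩ Z) ⟨hσ, hσF, hB.1.1 hσ⟩ ⟨hτ, hτF, hB.1.1 hτ⟩ hγστ
  have hαZ : α ∈ Z \ (B ∩ Z) := ⟨⟨hαF, hα.1⟩, fun h => hα.2 h.1⟩
  have hγC : γ ∈ posSpan (Z \ (B ∩ Z)) := by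
    rcases hb.eq_or_lt with rfl | hb
    · exact cone2_subset_posSpan hαZ hαZ ⟨a, 0, ha, le_rfl, by rw [hγeq, zero_smul]; simp⟩
    · have hβ_span : β ∈ Submodule.span ℝ {α, γ} := Submodule.mem_span_pair.2
        ⟨-(a / b), b⁻¹, by rw [hγeq]; match_scalars <;> field_simp; ring⟩
      have hβF : β ∈ F := hF.2 α hαF γ hγF ⟨seg_subset_wholeSet i hβ.1, hβ_span⟩
      exact cone2_subset_posSpan hαZ ⟨⟨hβF, hβ.1⟩, fun h => hβ.2 h.1⟩ ⟨a, b, ha, hb.le, hγeq⟩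
  exact hs.ne_zero hγ (hsep ▸ ⟨hγB, hγC⟩ : γ ∈ ({0} : Set V))

lemma isBiclosedIn_insert (hs : SuitableEnum N g) (hi : (i : ℕ∞) < N) {B : Set V}
    (hB : IsBiclosedIn (seg N g i) B)
    (hgen : ∀ α ∈ seg N g i \ B, ∀ β ∈ seg N g i \ B, g i ∉ cone2 α β) :
    IsBiclosedIn (seg N g (i + 1)) (insert (g i) B) := by
  have hX : seg N g i ⊆ wholeSet N g := seg_subset_wholeSet i
  have hray : ∀ ζ ∈ seg N g i, ζ ∈ cone2 (g i) (g i) → ζ ∈ B := by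
    rintro ζ hζ ⟨a, b, ha, hb, hζeq⟩
    by_contra hζB
    have hab : 0 < a + b := (add_nonneg ha hb).lt_of_ne fun h =>
      hs.ne_zero (hX hζ) (by rw [hζeq, ← add_smul, ← h, zero_smul])
    refine hgen ζ ⟨hζ, hζB⟩ ζ ⟨hζ, hζB⟩ ⟨(a + b)⁻¹, 0, by positivity, le_rfl, ?_⟩
    rw [hζeq, zero_smul, add_zero, ← add_smul, smul_smul, inv_mul_cancel₀ hab.ne', one_smul]
  have hmixed : ∀ σ ∈ B, ∀ ζ ∈ seg N g i, ζ ∈ cone2 σ (g i) → ζ ∈ B := by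
    rintro σ hσ ζ hζ ⟨a, b, ha, hb, hζeq⟩
    rcases hb.eq_or_lt with rfl | hb
    · exact hB.1.2 σ hσ σ hσ ζ hζ ⟨a, 0, ha, le_rfl, by simp [hζeq]⟩
    obtain ⟨w, hw, hζw, hγw⟩ := hs.exists_mem_seg_between hi (hB.1.1 hσ) hζ ha hb hζeq
    by_cases hwB : w ∈ B
    · exact hB.1.2 σ hσ w hwB ζ hζ hζw
    · by_contra hζB
      exact hgen ζ ⟨hζ, hζB⟩ w ⟨hw, hwB⟩ hγw
  have hγ : g i ∉ seg N g i := apply_notMem_seg hs.1 hi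
  rw [seg_succ_of_lt hi]
  refine ⟨⟨Set.insert_subset_insert hB.1.1, ?_⟩, ?_⟩
  · rintro α hα β hβ ζ (rfl | hζ) hcone
    · exact Set.mem_insert _ _
    refine Set.mem_insert_of_mem _ ?_
    rcases hα with rfl | hα <;> rcases hβ with rfl | hβ
    · exact hray ζ hζ hcone
    · exact hmixed β hβ ζ hζ (cone2_comm (g i) β ▸ hcone)
    · exact hmixed α hα ζ hζ hcone
    · exact hB.1.2 α hα β hβ ζ hζ hcone
  · rw [Set.insert_sdiff_of_mem _ (Set.mem_insert _ _), Set.sdiff_insert_of_notMem hγ]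
    refine ⟨hB.2.1.trans (Set.subset_insert _ _), ?_⟩
    rintro α hα β hβ ζ (rfl | hζ) hcone
    · exact absurd hcone (hgen α hα β hβ)
    · exact hB.2.2 α hα β hβ ζ hζ hcone

lemma isBiclosedIn_seg_succ (hs : SuitableEnum N g) (hi : (i : ℕ∞) < N) {B : Set V}
    (hB : IsBiclosedIn (seg N g i) B) (hgen : ∀ σ ∈ B, ∀ τ ∈ B, g i ∉ cone2 σ τ) :
    IsBiclosedIn (seg N g (i + 1)) B := by
  have hcompl := (hs.isBiclosedIn_insert hi hB.diff
    (by rwa [Set.sdiff_sdiff_cancel_left hB.1.1])).diff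
  rw [seg_succ_of_lt hi] at hcompl ⊢
  rwa [Set.insert_sdiff_of_mem _ (Set.mem_insert _ _),
    Set.sdiff_insert_of_notMem (apply_notMem_seg hs.1 hi),
    Set.sdiff_sdiff_cancel_left hB.1.1] at hcompl

lemma notMem_cone2_of_mem_or_mem_cone2 (hs : SuitableEnum N g) (hi : (i : ℕ∞) < N) {m : ℕ}
    {U B : Set V} (hU : IsCoclosedIn (seg N g m) U) (hB : IsBiclosedIn (seg N g i) B)
    (hUB : U ∩ seg N g i ⊆ B) (hadd : g i ∈ U ∨ ∃ σ ∈ B, ∃ τ ∈ B, g i ∈ cone2 σ τ)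
    {α β : V} (hα : α ∈ seg N g i \ B) (hβ : β ∈ seg N g i \ B) : g i ∉ cone2 α β := by
  rcases hadd with hγU | ⟨σ, hσ, τ, hτ, hγ⟩
  · have hsub : seg N g i \ B ⊆ seg N g m \ U := fun x hx =>
      ⟨seg_mono (lt_of_apply_mem_seg hs.1 hi (hU.1 hγU)).le hx.1, fun hxU => hx.2 (hUB ⟨hxU, hx.1⟩)⟩
    exact fun hcone => (hU.2.2 α (hsub hα) β (hsub hβ) _ (hU.1 hγU) hcone).2 hγU
  · exact hs.notMem_cone2_of_mem_cone2 hB hσ hτ hα hβ ⟨i, hi, rfl⟩ hγ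

lemma isBiclosedIn_closureIn_seg_succ (hs : SuitableEnum N g) {m : ℕ} {U : Set V}
    (hU : IsCoclosedIn (seg N g m) U)
    (hB : IsBiclosedIn (seg N g i) (closureIn (seg N g i) (U ∩ seg N g i))) :
    IsBiclosedIn (seg N g (i + 1)) (closureIn (seg N g (i + 1)) (U ∩ seg N g (i + 1))) := by
  by_cases hi : (i : ℕ∞) < N
  swap
  · rwa [seg_succ_of_not_lt hi]
  set B := closureIn (seg N g i) (U ∩ seg N g i)
  have hsucc := seg_succ_of_lt (g := g) hi
  have hBsub : B ⊆ closureIn (seg N g (i + 1)) (U ∩ seg N g (i + 1)) :=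
    closureIn_subset_closureIn (seg_mono i.le_succ) Set.inter_subset_right
      fun x hx => ⟨⟨hx.1, seg_mono i.le_succ hx.2⟩, hx.2⟩
  have hUB : U ∩ seg N g (i + 1) ⊆ insert (g i) B := by
    rw [hsucc]
    rintro x ⟨hxU, rfl | hx⟩
    exacts [Set.mem_insert _ _, Set.mem_insert_of_mem _ (subset_closureIn _ _ ⟨hxU, hx⟩)]
  by_cases hadd : g i ∈ U ∨ ∃ σ ∈ B, ∃ τ ∈ B, g i ∈ cone2 σ τ
  · have hW := hs.isBiclosedIn_insert hi hB fun α hα β hβ =>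
      hs.notMem_cone2_of_mem_or_mem_cone2 hi hU hB (subset_closureIn _ _) hadd hα hβ
    have hγ : g i ∈ closureIn (seg N g (i + 1)) (U ∩ seg N g (i + 1)) := by
      have hγseg : g i ∈ seg N g (i + 1) := hsucc ▸ Set.mem_insert _ _
      rcases hadd with hγU | ⟨σ, hσ, τ, hτ, hγ⟩
      · exact subset_closureIn _ _ ⟨hγU, hγseg⟩
      · exact (isClosedIn_closureIn Set.inter_subset_right).2 σ (hBsub hσ) τ (hBsub hτ) _
          hγseg hγ
    rwa [(closureIn_subset hUB hW.1).antisymm (Set.insert_subset hγ hBsub)]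
  · push Not at hadd
    have hW := hs.isBiclosedIn_seg_succ hi hB hadd.2
    have hUB' : U ∩ seg N g (i + 1) ⊆ B := fun x hx =>
      (hUB hx).resolve_left fun hxγ => hadd.1 (hxγ ▸ hx.1)
    rwa [(closureIn_subset hUB' hW.1).antisymm hBsub]

lemma isBiclosedIn_closureIn_seg (hs : SuitableEnum N g) {m : ℕ} {U : Set V}
    (hU : IsCoclosedIn (seg N g m) U) (i : ℕ) :
    IsBiclosedIn (seg N g i) (closureIn (seg N g i) (U ∩ seg N g i)) := by
  induction i with
  | zero =>
    have hempty : closureIn (∅ : Set V) (U ∩ ∅) = ∅ :=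
      Set.subset_empty_iff.1 (closureIn_subset Set.inter_subset_right (isClosedIn_self ∅))
    rw [seg_zero, hempty]
    exact ⟨isClosedIn_self ∅, by simpa using isClosedIn_self (∅ : Set V)⟩
  | succ i ih => exact hs.isBiclosedIn_closureIn_seg_succ hU ih

end SuitableEnum

/-- If `X` has a suitable ordering, `Xₘ` is an initial segment, and `U`
is coclosed in `Xₘ`, then the closure of `U` in `X` is biclosed in `X`. -/
theorem closure_of_coclosed_isBiclosed
    (N : ℕ∞) (g : ℕ → V) (hs : SuitableEnum N g)
    (m : ℕ) (U : Set V) (hU : IsCoclosedIn (seg N g m) U) :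
    IsBiclosedIn (wholeSet N g) (closureIn (wholeSet N g) U) := by
  have hmono : Monotone fun i => closureIn (seg N g i) (U ∩ seg N g i) := fun i j hij =>
    closureIn_subset_closureIn (seg_mono hij) Set.inter_subset_right
      fun x hx => ⟨⟨hx.1, seg_mono hij hx.2⟩, hx.2⟩
  have hunion := isBiclosedIn_iUnion seg_mono hmono (hs.isBiclosedIn_closureIn_seg hU)
  rw [iUnion_seg] at hunion
  have hUX : U ⊆ wholeSet N g := hU.1.trans (seg_subset_wholeSet m)
  have hUunion : U ⊆ ⋃ i, closureIn (seg N g i) (U ∩ seg N g i) := fun x hx =>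
    Set.mem_iUnion.2 ⟨m, subset_closureIn (seg N g m) _ ⟨hx, hU.1 hx⟩⟩
  have hclosure : closureIn (wholeSet N g) U = ⋃ i, closureIn (seg N g i) (U ∩ seg N g i) :=
    (closureIn_subset hUunion hunion.1).antisymm
      (Set.iUnion_subset fun i => closureIn_subset_closureIn (seg_subset_wholeSet i) hUX subset_rfl)
  rwa [hclosure]
end

section
/- In type Ã₂ with the notation β_i^k, if J is a finite order ideal of the root poset in which γ = β_g^k is maximal, then for every h ∈ {1,...,6}, the largest j with β_h^j ∈ J (denoted k_h) equals k−1 or k. -/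
open Set

variable {V : Type*} [AddCommGroup V] [Module ℝ V]

/-- The simple roots `α₁, α₂, α₃` of `Ã₂`, realized as the standard basis of `ℝ³`. -/
noncomputable def simpleA (i : Fin 3) : Fin 3 → ℝ := Pi.single i 1

/-- The six vectors `β₁⁰, ..., β₆⁰`. -/
noncomputable def betaA : Fin 6 → (Fin 3 → ℝ) :=
  ![simpleA 0, simpleA 0 + simpleA 1, simpleA 1, simpleA 1 + simpleA 2, simpleA 2,
    simpleA 0 + simpleA 2]

/-- The primitive imaginary root `δ = α₁ + α₂ + α₃`. -/
noncomputable def deltaA : Fin 3 → ℝ := simpleA 0 + simpleA 1 + simpleA 2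

/-- The root poset order of `Ã₂`: `x ⪯ y` iff `y - x ∈ Span₊{α₁, α₂, α₃}`. -/
def rleA (x y : Fin 3 → ℝ) : Prop :=
  y - x ∈ posSpan {simpleA 0, simpleA 1, simpleA 2}

/-- The positive roots of `Ã₂`: `β_i^k = β_i⁰ + kδ` for `1 ≤ i ≤ 6`, `k ≥ 0`. -/
def posRootsA : Set (Fin 3 → ℝ) :=
  {v | ∃ (i : Fin 6) (k : ℕ), v = betaA i + k • deltaA}

/-! The coordinates of `β_i⁰` lie in `{0, 1}` and `δ = (1, 1, 1)`, so `β_i^j ⪯ β_{i'}^k`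
whenever `j < k`. Hence everything below level `k` lies under `γ` and so in `J`, while a root
`β_h^j ∈ J` with `j > k` would lie strictly above `γ`, against its maximality. -/

lemma mem_posSpan_range_single_of_nonneg {ι : Type*} [Fintype ι] [DecidableEq ι] {v : ι → ℝ}
    (hv : 0 ≤ v) : v ∈ posSpan (range fun i => Pi.single i (1 : ℝ)) := by
  refine ⟨Finset.univ.image (fun i => Pi.single i 1), fun w => w ⬝ᵥ v, ?_, ?_, ?_⟩
  · simp
  · simp only [Finset.mem_image, Finset.mem_univ, true_and, forall_exists_index]
    rintro _ i rfl
    simpa using hv i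
  · have hinj : Function.Injective fun i : ι => Pi.single i (1 : ℝ) := fun i j hij =>
      (by simpa [Pi.single_apply] using congrFun hij j : j = i).symm
    rw [Finset.sum_image fun i _ j _ hij => hinj hij]
    simp only [single_dotProduct, one_mul]
    exact pi_eq_sum_univ' v

lemma rleA_of_le {x y : Fin 3 → ℝ} (h : x ≤ y) : rleA x y := by
  have hrange : range simpleA = {simpleA 0, simpleA 1, simpleA 2} := by
    ext v
    simp [Fin.exists_fin_succ, eq_comm]
  rw [rleA, ← hrange]
  exact mem_posSpan_range_single_of_nonneg (sub_nonneg.mpr h)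

lemma betaA_add_nsmul_deltaA_apply (i : Fin 6) (n : ℕ) (m : Fin 3) :
    (betaA i + n • deltaA) m = betaA i m + n := by
  fin_cases m <;> simp [deltaA, simpleA]

lemma betaA_add_nsmul_deltaA_le_of_lt {i i' : Fin 6} {j k : ℕ} (hjk : j < k) :
    betaA i + j • deltaA ≤ betaA i' + k • deltaA := by
  intro m
  have hjk' : (j : ℝ) + 1 ≤ k := by exact_mod_cast hjk
  have hi : betaA i m ≤ 1 := by fin_cases i <;> fin_cases m <;> simp [betaA, simpleA]
  have hi' : 0 ≤ betaA i' m := by fin_cases i' <;> fin_cases m <;> simp [betaA, simpleA]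
  simp only [betaA_add_nsmul_deltaA_apply]
  linarith

lemma sum_betaA_mem_Icc (i : Fin 6) : ∑ m, betaA i m ∈ Icc (1 : ℝ) 2 := by
  fin_cases i <;> simp [Fin.sum_univ_three, betaA, simpleA] <;> norm_num

/-- Compare heights: `β_i⁰` has height `1` or `2`, while `δ` has height `3`. -/
lemma eq_of_betaA_add_nsmul_deltaA_eq {i i' : Fin 6} {j k : ℕ}
    (h : betaA i + j • deltaA = betaA i' + k • deltaA) : j = k := by
  have hsum : ∑ m, (betaA i + j • deltaA) m = ∑ m, (betaA i' + k • deltaA) m := by rw [h]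
  simp only [betaA_add_nsmul_deltaA_apply] at hsum
  simp only [Finset.sum_add_distrib, Finset.sum_const, Finset.card_univ, Fintype.card_fin,
    nsmul_eq_mul] at hsum
  push_cast at hsum
  obtain ⟨hi₁, hi₂⟩ := sum_betaA_mem_Icc i
  obtain ⟨hi'₁, hi'₂⟩ := sum_betaA_mem_Icc i'
  have hjk : j < k + 1 := by exact_mod_cast (by linarith : (j : ℝ) < k + 1)
  have hkj : k < j + 1 := by exact_mod_cast (by linarith : (k : ℝ) < j + 1)
  omega

theorem kh_eq_k_or_k_sub_one_general
    (J : Set (Fin 3 → ℝ))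
    (hIdeal : ∀ γ ∈ J, ∀ b ∈ posRootsA, rleA b γ → b ∈ J)
    (g : Fin 6) (k : ℕ)
    (hmem : betaA g + k • deltaA ∈ J)
    (hmax : ∀ b ∈ J, rleA (betaA g + k • deltaA) b → b = betaA g + k • deltaA) :
    ∀ h : Fin 6,
      (∀ j : ℕ, betaA h + j • deltaA ∈ J → j ≤ k) ∧
      (∀ j : ℕ, j < k → betaA h + j • deltaA ∈ J) := by
  intro h
  refine ⟨fun j hj => ?_, fun j hjk => ?_⟩
  · by_contra! hkj
    have heq := hmax _ hj (rleA_of_le (betaA_add_nsmul_deltaA_le_of_lt hkj))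
    exact hkj.ne' (eq_of_betaA_add_nsmul_deltaA_eq heq)
  · exact hIdeal _ hmem _ ⟨h, j, rfl⟩ (rleA_of_le (betaA_add_nsmul_deltaA_le_of_lt hjk))

/-- In `Ã₂`, if `J` is a finite order ideal of the root poset in which
`γ = β_g^k` is maximal, then for every `h ∈ {1,...,6}` the largest `j` with
`β_h^j ∈ J` equals `k − 1` or `k`; i.e., `β_h^j ∈ J` implies `j ≤ k`, and
`β_h^j ∈ J` whenever `j < k`. -/
theorem kh_eq_k_or_k_sub_one
    (J : Set (Fin 3 → ℝ)) (hJfin : J.Finite) (hJsub : J ⊆ posRootsA)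
    (hIdeal : ∀ γ ∈ J, ∀ b ∈ posRootsA, rleA b γ → b ∈ J)
    (g : Fin 6) (k : ℕ)
    (hmem : betaA g + k • deltaA ∈ J)
    (hmax : ∀ b ∈ J, rleA (betaA g + k • deltaA) b → b = betaA g + k • deltaA) :
    ∀ h : Fin 6,
      (∀ j : ℕ, betaA h + j • deltaA ∈ J → j ≤ k) ∧
      (∀ j : ℕ, j < k → betaA h + j • deltaA ∈ J) :=
  kh_eq_k_or_k_sub_one_general J hIdeal g k hmem hmax
end

section
/- Under folding Conditions 1 and 2, if I is an order ideal in the root poset of Φ⁺ and B is biclosed in I, then f⁻¹(B) is biclosed in f⁻¹(I). -/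
open Set

variable {V : Type*} [AddCommGroup V] [Module ℝ V]

/-- A (symmetrizable, crystallographic, real, reduced) root system with a chosen base. -/
structure RootSystemData (V : Type*) [AddCommGroup V] [Module ℝ V] where
  form : V →ₗ[ℝ] V →ₗ[ℝ] ℝ
  symm : ∀ x y : V, form x y = form y x
  Φ : Set V
  base : Set V
  base_sub : base ⊆ Φ
  pos_self : ∀ α ∈ Φ, 0 < form α α
  refl_mem : ∀ α ∈ Φ, ∀ β ∈ Φ, β - (2 * form α β / form α α) • α ∈ Φ
  reduced : ∀ α ∈ Φ, ∀ r : ℝ, r • α ∈ Φ → r = 1 ∨ r = -1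
  pos_neg : ∀ α ∈ Φ, Xor' (α ∈ posSpan base) (-α ∈ posSpan base)
  base_min : ∀ α ∈ base, α ∉ posSpan (base \ {α})
  cryst : ∀ α ∈ Φ, α ∈ AddSubgroup.closure base

variable {V : Type*} [AddCommGroup V] [Module ℝ V]

/-- The positive roots. -/
def RootSystemData.pos (R : RootSystemData V) : Set V := R.Φ ∩ posSpan R.base

/-- A root subsystem: a subset closed under the reflections over its own elements. -/
def RootSystemData.IsSubsystem (R : RootSystemData V) (Λ : Set V) : Prop :=
  Λ ⊆ R.Φ ∧ ∀ α ∈ Λ, ∀ β ∈ Λ, β - (2 * R.form α β / R.form α α) • α ∈ Λ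

/-- A full subsystem: `F ∩ Span{α,β} = Φ ∩ Span{α,β}` for all `α, β ∈ F`. -/
def RootSystemData.IsFullSub (R : RootSystemData V) (F : Set V) : Prop :=
  ∀ α ∈ F, ∀ β ∈ F, R.Φ ∩ (Submodule.span ℝ {α, β} : Set V) ⊆ F

/-- The fundamental roots of a subsystem `Λ`: positive roots of `Λ` not expressible as
nonnegative combinations of the other positive roots of `Λ`. -/
def RootSystemData.fund (R : RootSystemData V) (Λ : Set V) : Set V :=
  {γ | γ ∈ Λ ∩ posSpan R.base ∧ γ ∉ posSpan ((Λ ∩ posSpan R.base) \ {γ})}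

/-- The root poset: `x ⪯ y` iff `y - x` is a nonnegative combination of base roots. -/
def rootLE (R : RootSystemData V) (x y : V) : Prop := y - x ∈ posSpan R.base

/-- An order ideal in the root poset of the positive roots. -/
def IsOrderIdealOf (R : RootSystemData V) (I : Set V) : Prop :=
  I ⊆ R.pos ∧ ∀ γ ∈ I, ∀ β ∈ R.pos, rootLE R β γ → β ∈ I

theorem sep_preimage_diff {α β : Type*} (S : Set α) (f : α → β) (X B : Set β) :
    {a | a ∈ S ∧ f a ∈ X} \ {a | a ∈ S ∧ f a ∈ B} = {a | a ∈ S ∧ f a ∈ X \ B} := by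
  ext a
  simp only [mem_sdiff, mem_ofPred_eq]
  tauto

section Preimage

variable {W : Type*} [AddCommGroup W] [Module ℝ W]

theorem LinearMap.mem_cone2_map (p : W →ₗ[ℝ] V) {α β γ : W} (h : γ ∈ cone2 α β) :
    p γ ∈ cone2 (p α) (p β) := by
  obtain ⟨a, b, ha, hb, rfl⟩ := h
  exact ⟨a, b, ha, hb, by rw [map_add, map_smul, map_smul]⟩

variable (S : Set W) (p : W →ₗ[ℝ] V) {X B : Set V}

theorem IsClosedIn.preimage (h : IsClosedIn X B) :
    IsClosedIn {b | b ∈ S ∧ p b ∈ X} {b | b ∈ S ∧ p b ∈ B} := by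
  obtain ⟨hBX, hclosed⟩ := h
  refine ⟨fun b hb => ⟨hb.1, hBX hb.2⟩, ?_⟩
  rintro α ⟨-, hα⟩ β ⟨-, hβ⟩ γ ⟨hγS, hγX⟩ hγ
  exact ⟨hγS, hclosed _ hα _ hβ _ hγX (p.mem_cone2_map hγ)⟩

theorem IsBiclosedIn.preimage (h : IsBiclosedIn X B) :
    IsBiclosedIn {b | b ∈ S ∧ p b ∈ X} {b | b ∈ S ∧ p b ∈ B} := by
  refine ⟨h.1.preimage S p, ?_⟩
  rw [sep_preimage_diff]
  exact h.2.preimage S p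

end Preimage

theorem preimage_biclosed_of_folding_general
    {W : Type*} [AddCommGroup W] [Module ℝ W]
    (Rh : RootSystemData W)
    (p : W →ₗ[ℝ] V)
    (I : Set V)
    (B : Set V) (hB : IsBiclosedIn I B) :
    IsBiclosedIn {b | b ∈ Rh.Φ ∧ p b ∈ I} {b | b ∈ Rh.Φ ∧ p b ∈ B} :=
  hB.preimage Rh.Φ p

/-- Under folding Conditions 1 and 2, if `I` is an order ideal of `Φ⁺`
and `B` is biclosed in `I`, then `f⁻¹(B)` is biclosed in `f⁻¹(I)`. -/
theorem preimage_biclosed_of_folding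
    {W : Type*} [AddCommGroup W] [Module ℝ W]
    (R : RootSystemData V) (Rh : RootSystemData W)
    (i : V →ₗ[ℝ] W) (p : W →ₗ[ℝ] V)
    (hi : Function.Injective i) (hp : Function.Surjective p)
    (hcond1 : p '' Rh.base = R.base) (hcond2 : p '' Rh.Φ = R.Φ)
    (I : Set V) (hI : IsOrderIdealOf R I)
    (B : Set V) (hB : IsBiclosedIn I B) :
    IsBiclosedIn {b | b ∈ Rh.Φ ∧ p b ∈ I} {b | b ∈ Rh.Φ ∧ p b ∈ B} :=
  preimage_biclosed_of_folding_general Rh p I B hB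
end

section
/- Under folding Conditions 1–3, if I is an order ideal of Φ⁺, B is biclosed in I, and f⁻¹(B) is separable in f⁻¹(I), then B is separable in I. -/
open Set

variable {V : Type*} [AddCommGroup V] [Module ℝ V]

variable {V : Type*} [AddCommGroup V] [Module ℝ V]

/-! A separating functional upstairs is pulled back along `i`: by Condition 3, `i α` is a
nonnegative combination of roots in the fibre `f⁻¹{α}`, and these all lie on the same side of
the functional as `α` does. -/

theorem RootSystemData.ne_zero_of_mem (R : RootSystemData V) {α : V} (hα : α ∈ R.Φ) :
    α ≠ 0 := by
  rintro rfl
  simpa using R.pos_self 0 hα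

theorem Module.Dual.apply_neg_of_mem_posSpan {S : Set V} (θ : Module.Dual ℝ V)
    (hS : ∀ b ∈ S, θ b < 0) {v : V} (hv : v ∈ posSpan S) (hv0 : v ≠ 0) : θ v < 0 := by
  obtain ⟨s, c, hsub, hc, rfl⟩ := hv
  have hterm : ∀ x ∈ s, c x * θ x ≤ 0 := fun x hx =>
    mul_nonpos_of_nonneg_of_nonpos (hc x hx) (hS x (hsub hx)).le
  simp only [map_sum, map_smul, smul_eq_mul]
  refine (Finset.sum_nonpos hterm).lt_of_ne fun hsum => hv0 (Finset.sum_eq_zero fun x hx => ?_)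
  have hcx : c x * θ x = 0 := (Finset.sum_eq_zero_iff_of_nonpos hterm).1 hsum x hx
  rw [(mul_eq_zero.1 hcx).resolve_right (hS x (hsub hx)).ne, zero_smul]

theorem pushforward_separable_of_folding_general
    {W : Type*} [AddCommGroup W] [Module ℝ W]
    (R : RootSystemData V) (Rh : RootSystemData W)
    (i : V →ₗ[ℝ] W) (p : W →ₗ[ℝ] V)
    (hi : Function.Injective i)
    (hcond3 : ∀ α ∈ R.Φ, i α ∈ posSpan {b | b ∈ Rh.Φ ∧ p b = α})
    (I : Set V) (hI : IsOrderIdealOf R I)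
    (B : Set V) (hB : IsBiclosedIn I B)
    (hsep : SeparableIn {b | b ∈ Rh.Φ ∧ p b ∈ I} {b | b ∈ Rh.Φ ∧ p b ∈ B}) :
    SeparableIn I B := by
  obtain ⟨-, θ, hθneg, hθpos⟩ := hsep
  have hBI : B ⊆ I := hB.1.1
  have pullback_neg : ∀ θ' : Module.Dual ℝ W, ∀ α ∈ I,
      (∀ b ∈ Rh.Φ, p b = α → θ' b < 0) → θ' (i α) < 0 := by
    intro θ' α hα hfibre
    have hΦ : α ∈ R.Φ := (hI.1 hα).1
    refine θ'.apply_neg_of_mem_posSpan (fun b hb => hfibre b hb.1 hb.2) (hcond3 α hΦ) ?_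
    exact (map_ne_zero_iff i hi).2 (R.ne_zero_of_mem hΦ)
  refine ⟨hBI, θ.comp i, fun α hα => ?_, fun α hα => ?_⟩
  · exact pullback_neg θ α (hBI hα) fun b hb hpb => hθneg b ⟨hb, hpb ▸ hα⟩
  · have := pullback_neg (-θ) α hα.1 fun b hb hpb =>
      neg_lt_zero.2 (hθpos b ⟨⟨hb, hpb ▸ hα.1⟩, fun h => hα.2 (hpb ▸ h.2)⟩)
    simpa using this

/-- Under folding Conditions 1–3, if `I` is an order ideal of `Φ⁺`, `B`
is biclosed in `I`, and `f⁻¹(B)` is separable in `f⁻¹(I)`, then `B` is separable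
in `I`. -/
theorem pushforward_separable_of_folding
    {W : Type*} [AddCommGroup W] [Module ℝ W]
    (R : RootSystemData V) (Rh : RootSystemData W)
    (i : V →ₗ[ℝ] W) (p : W →ₗ[ℝ] V)
    (hi : Function.Injective i) (hp : Function.Surjective p)
    (hcond1 : p '' Rh.base = R.base) (hcond2 : p '' Rh.Φ = R.Φ)
    (hcond3 : ∀ α ∈ R.Φ, i α ∈ posSpan {b | b ∈ Rh.Φ ∧ p b = α})
    (I : Set V) (hI : IsOrderIdealOf R I)
    (B : Set V) (hB : IsBiclosedIn I B)
    (hsep : SeparableIn {b | b ∈ Rh.Φ ∧ p b ∈ I} {b | b ∈ Rh.Φ ∧ p b ∈ B}) :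
    SeparableIn I B :=
  pushforward_separable_of_folding_general R Rh i p hi hcond3 I hI B hB hsep
end
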